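/- arXiv:2309.14082 — 2 statements merged into one kernel-verified Lean document; each statement's English description precedes it below -/
import Mathlib

section
/- The function x ↦ (1/2)‖Ax − y‖² + μ·Ψ_B(Lx) is convex on X whenever A*A − μ·L*B*BL is positive semidefinite, where Ψ_B(z) = Ψ(z) − inf_v [Ψ(v) + (1/2)‖B(z−v)‖²]. (Univariate instance of the overall convexity condition.) -/
open RealInnerProductSpace Set Filter

/-! The function is the supremum over `v` of
`½‖Ax − y‖² − (μ/2)‖BLx − Bv‖² + μ Ψ(Lx) − μ Ψ(v)`. Each of these is convex: `Ψ ∘ L` is, and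
the convexity gap of the quadratic part between `x` and `z` is
`(ab/2) (‖A(x − z)‖² − μ ‖BL(x − z)‖²) ≥ 0`. A pointwise bounded supremum of convex functions
is convex, and the supremum is bounded because the continuous coercive `Ψ` attains a minimum. -/

theorem exists_forall_le_of_coercive {E : Type*} [NormedAddCommGroup E] [ProperSpace E]
    {f : E → ℝ} (hf : Continuous f) (hcoer : ∀ c : ℝ, ∃ r : ℝ, ∀ v : E, r ≤ ‖v‖ → c ≤ f v) :
    ∃ x, ∀ y, f x ≤ f y := by
  refine hf.exists_forall_le (tendsto_atTop.2 fun c => ?_)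
  obtain ⟨r, hr⟩ := hcoer c
  exact (tendsto_norm_cocompact_atTop.eventually_ge_atTop r).mono hr

theorem ConvexOn.sub_ciInf {ι E : Type*} [Nonempty ι] [AddCommGroup E] [Module ℝ E]
    {s : Set E} {f : E → ℝ} {g : ι → E → ℝ}
    (hfg : ∀ i, ConvexOn ℝ s fun x => f x - g i x)
    (hbdd : ∀ x ∈ s, BddBelow (range fun i => g i x)) :
    ConvexOn ℝ s fun x => f x - ⨅ i, g i x := by
  refine ⟨(hfg (Classical.arbitrary ι)).1, fun x hx z hz a b ha hb hab => ?_⟩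
  simp only [smul_eq_mul]
  have hmember : ∀ i, f (a • x + b • z) - g i (a • x + b • z) ≤
      a * (f x - ⨅ i, g i x) + b * (f z - ⨅ i, g i z) := fun i => by
    refine ((hfg i).2 hx hz ha hb hab).trans ?_
    have hx' := ciInf_le (hbdd x hx) i
    have hz' := ciInf_le (hbdd z hz) i
    simp only [smul_eq_mul]
    gcongr
  have := le_ciInf fun i => sub_le_comm.mp (hmember i)
  linarith

theorem norm_smul_add_smul_sq {E : Type*} [NormedAddCommGroup E] [InnerProductSpace ℝ E]
    {a b : ℝ} (hab : a + b = 1) (u v : E) :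
    ‖a • u + b • v‖ ^ 2 = a * ‖u‖ ^ 2 + b * ‖v‖ ^ 2 - a * b * ‖u - v‖ ^ 2 := by
  rw [norm_add_sq_real, norm_sub_sq_real, norm_smul, norm_smul, real_inner_smul_left,
    real_inner_smul_right, mul_pow, mul_pow, Real.norm_eq_abs, Real.norm_eq_abs, sq_abs, sq_abs]
  obtain rfl := eq_sub_of_add_eq hab
  ring

theorem LinearMap.map_combo_sub {E F : Type*} [AddCommGroup E] [Module ℝ E] [AddCommGroup F]
    [Module ℝ F] (T : E →ₗ[ℝ] F) (c : F) {a b : ℝ} (hab : a + b = 1) (x z : E) :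
    T (a • x + b • z) - c = a • (T x - c) + b • (T z - c) := by
  conv_lhs => rw [← Convex.combo_self hab c]
  rw [map_add, map_smul, map_smul]
  module

theorem convexOn_norm_sub_sq_sub_mul_norm_sub_sq {E F G : Type*}
    [AddCommGroup E] [Module ℝ E]
    [NormedAddCommGroup F] [InnerProductSpace ℝ F] [NormedAddCommGroup G] [InnerProductSpace ℝ G]
    (T : E →ₗ[ℝ] F) (S : E →ₗ[ℝ] G) (c : F) (d : G) {μ : ℝ}
    (hTS : ∀ u, μ * ‖S u‖ ^ 2 ≤ ‖T u‖ ^ 2) :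
    ConvexOn ℝ univ fun x => ‖T x - c‖ ^ 2 - μ * ‖S x - d‖ ^ 2 := by
  refine ⟨convex_univ, fun x _ z _ a b ha hb hab => ?_⟩
  simp only [smul_eq_mul, T.map_combo_sub c hab, S.map_combo_sub d hab,
    norm_smul_add_smul_sq hab, sub_sub_sub_cancel_right, ← map_sub]
  nlinarith [mul_nonneg ha hb, hTS (x - z)]

theorem inner_adjoint_comp_self_sub_smul_apply_self {X Y W : Type*}
    [NormedAddCommGroup X] [InnerProductSpace ℝ X] [FiniteDimensional ℝ X]
    [NormedAddCommGroup Y] [InnerProductSpace ℝ Y] [FiniteDimensional ℝ Y]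
    [NormedAddCommGroup W] [InnerProductSpace ℝ W] [FiniteDimensional ℝ W]
    (T : X →ₗ[ℝ] Y) (S : X →ₗ[ℝ] W) (μ : ℝ) (x : X) :
    ⟪(LinearMap.adjoint T ∘ₗ T - μ • (LinearMap.adjoint S ∘ₗ S)) x, x⟫ =
      ‖T x‖ ^ 2 - μ * ‖S x‖ ^ 2 := by
  simp only [LinearMap.sub_apply, LinearMap.smul_apply, LinearMap.comp_apply, inner_sub_left,
    real_inner_smul_left, LinearMap.adjoint_inner_left, real_inner_self_eq_norm_sq]

/-- Overall convexity (univariate instance): if A*A − μ L*B*B L ⪰ 0 then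
x ↦ ½‖Ax − y‖² + μ Ψ_B(Lx) is convex. -/
theorem stmt_3
    {X Y Z Z' : Type*}
    [NormedAddCommGroup X] [InnerProductSpace ℝ X] [FiniteDimensional ℝ X]
    [NormedAddCommGroup Y] [InnerProductSpace ℝ Y] [FiniteDimensional ℝ Y]
    [NormedAddCommGroup Z] [InnerProductSpace ℝ Z] [FiniteDimensional ℝ Z]
    [NormedAddCommGroup Z'] [InnerProductSpace ℝ Z'] [FiniteDimensional ℝ Z']
    (A : X →ₗ[ℝ] Y) (L : X →ₗ[ℝ] Z) (B : Z →ₗ[ℝ] Z') (y : Y) (μ : ℝ) (hμ : 0 < μ)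
    (Ψ : Z → ℝ) (hconv : ConvexOn ℝ Set.univ Ψ) (hcont : Continuous Ψ)
    (hcoer : ∀ c : ℝ, ∃ r : ℝ, ∀ v : Z, r ≤ ‖v‖ → c ≤ Ψ v)
    (hpsd : ∀ x : X, 0 ≤ ⟪(LinearMap.adjoint A ∘ₗ A - μ • (LinearMap.adjoint L ∘ₗ LinearMap.adjoint B ∘ₗ B ∘ₗ L)) x, x⟫) :
    ConvexOn ℝ Set.univ (fun x : X =>
      ‖A x - y‖ ^ 2 / 2 + μ * (Ψ (L x) - ⨅ v : Z, (Ψ v + ‖B (L x - v)‖ ^ 2 / 2))) := by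
  obtain ⟨v₀, hv₀⟩ := exists_forall_le_of_coercive hcont hcoer
  have hAB : ∀ u, μ * ‖(B ∘ₗ L) u‖ ^ 2 ≤ ‖A u‖ ^ 2 := fun u => by
    have := hpsd u
    rw [← LinearMap.comp_assoc, ← LinearMap.adjoint_comp,
      inner_adjoint_comp_self_sub_smul_apply_self] at this
    linarith
  have hmember : ∀ v, ConvexOn ℝ univ fun x =>
      (‖A x - y‖ ^ 2 / 2 + μ * Ψ (L x)) - μ * (Ψ v + ‖B (L x - v)‖ ^ 2 / 2) := fun v => by
    refine ((((convexOn_norm_sub_sq_sub_mul_norm_sub_sq A (B ∘ₗ L) y (B v) hAB).smul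
      (by norm_num : (0 : ℝ) ≤ 1 / 2)).add ((hconv.comp_linearMap L).smul hμ.le)).add_const
      (-(μ * Ψ v))).congr fun x _ => ?_
    simp only [Pi.add_apply, Function.comp_apply, LinearMap.comp_apply, map_sub, smul_eq_mul]
    ring
  have hbdd : ∀ x ∈ (univ : Set X), BddBelow (range fun v => μ * (Ψ v + ‖B (L x - v)‖ ^ 2 / 2)) :=
    fun x _ => ⟨μ * Ψ v₀, by
      rintro _ ⟨v, rfl⟩
      have := hv₀ v
      dsimp only
      nlinarith [sq_nonneg ‖B (L x - v)‖]⟩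
  refine (ConvexOn.sub_ciInf hmember hbdd).congr fun x _ => ?_
  simp only [← Real.mul_iInf_of_nonneg hμ.le]
  ring
end

section
/- Let T : H → H be a nonexpansive map on a finite-dimensional real Hilbert space with Fix(T) ≠ ∅, and suppose T is α-averaged for some α ∈ (0,1), i.e., T = (1−α)Id + αR for some nonexpansive R. Then for any x₀, the sequence x_{k+1} = T(x_k) converges to a fixed point of T. -/
open Filter Topology


lemma km_key {H : Type*} [NormedAddCommGroup H] [InnerProductSpace ℝ H]
    (α : ℝ) (a b : H) :
    ‖(1-α)•a + α•b‖^2 = (1-α)*‖a‖^2 + α*‖b‖^2 - α*(1-α)*‖a-b‖^2 := by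
  have e : ∀ x : H, ‖x‖^2 = inner ℝ x x := fun x => (real_inner_self_eq_norm_sq x).symm
  simp only [e, inner_add_left, inner_add_right, inner_sub_left, inner_sub_right,
    real_inner_smul_left, real_inner_smul_right]
  rw [real_inner_comm b a]
  ring




/-- Krasnosel'skiĭ–Mann: an α-averaged nonexpansive map with a fixed point has
convergent Picard iterations (finite dimensions). -/
theorem stmt_10
    {H : Type*} [NormedAddCommGroup H] [InnerProductSpace ℝ H] [FiniteDimensional ℝ H]
    (T R : H → H) (α : ℝ) (hα : α ∈ Set.Ioo (0 : ℝ) 1)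
    (hR : ∀ x y : H, ‖R x - R y‖ ≤ ‖x - y‖)
    (hT : ∀ x : H, T x = (1 - α) • x + α • R x)
    (hfix : ∃ x : H, T x = x) (x₀ : H) :
    ∃ p : H, T p = p ∧
      Filter.Tendsto (fun k : ℕ => T^[k] x₀) Filter.atTop (nhds p) := by
  obtain ⟨hα0, hα1⟩ := hα
  obtain ⟨p₀, hp₀⟩ := hfix
  set x : ℕ → H := fun k => T^[k] x₀ with hx
  have hxsucc : ∀ k, x (k+1) = T (x k) := fun k => Function.iterate_succ_apply' T k x₀
  have hRfix : ∀ p, T p = p → R p = p := by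
    intro p hp
    have h1 : (1 - α) • p + α • R p = p := by rw [← hT p, hp]
    have h2 : α • R p - α • p = ((1 - α) • p + α • R p) - p := by module
    rw [h1, sub_self] at h2
    exact smul_right_injective H (ne_of_gt hα0) (sub_eq_zero.mp h2)
  have hRp₀ : R p₀ = p₀ := hRfix p₀ hp₀
  -- key inequality
  have hkey : ∀ (p : H), T p = p → ∀ y : H,
      ‖T y - p‖^2 + ((1-α)/α) * ‖y - T y‖^2 ≤ ‖y - p‖^2 := by
    intro p hp y
    have hRpp : R p = p := hRfix p hp
    have hTd : T y - p = (1-α) • (y - p) + α • (R y - p) := by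
      rw [hT y]; module
    have hyT : y - T y = α • (y - R y) := by
      rw [hT y]; module
    have hnorm : ‖y - T y‖^2 = α^2 * ‖y - R y‖^2 := by
      rw [hyT, norm_smul, Real.norm_eq_abs, abs_of_pos hα0, mul_pow]
    have hid := km_key α (y - p) (R y - p)
    rw [← hTd] at hid
    have hsub : (y - p) - (R y - p) = y - R y := by abel
    rw [hsub] at hid
    have hRle : ‖R y - p‖^2 ≤ ‖y - p‖^2 := by
      have := hR y p
      rw [hRpp] at this
      nlinarith [norm_nonneg (R y - p), norm_nonneg (y - p)]
    have heq : ((1-α)/α) * ‖y - T y‖^2 = α*(1-α)*‖y - R y‖^2 := by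
      rw [hnorm]; field_simp
    rw [heq]
    nlinarith
  -- antitone distances to any fixed point
  have hanti : ∀ p, T p = p → Antitone (fun k => ‖x k - p‖) := by
    intro p hp
    apply antitone_nat_of_succ_le
    intro k
    have h := hkey p hp (x k)
    rw [← hxsucc k] at h
    have hc : (0:ℝ) ≤ ((1-α)/α) * ‖x k - x (k+1)‖^2 :=
      mul_nonneg (div_nonneg (by linarith) (le_of_lt hα0)) (sq_nonneg _)
    have h2 : ‖x (k+1) - p‖^2 ≤ ‖x k - p‖^2 := by linarith
    nlinarith [norm_nonneg (x (k+1) - p), norm_nonneg (x k - p)]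
  -- continuity of T
  have hRc : Continuous R := by
    have : LipschitzWith 1 R := LipschitzWith.of_dist_le_mul (fun a b => by
      rw [dist_eq_norm, dist_eq_norm]; simpa using hR a b)
    exact this.continuous
  have hTc : Continuous T := by
    have : T = fun y => (1-α) • y + α • R y := funext hT
    rw [this]
    exact (continuous_id.const_smul _).add (hRc.const_smul _)
  -- squared distances to p₀ converge
  set a : ℕ → ℝ := fun k => ‖x k - p₀‖^2 with ha
  have haanti : Antitone a := by
    intro m n hmn
    have := hanti p₀ hp₀ hmn
    simp only [a]
    nlinarith [norm_nonneg (x n - p₀), norm_nonneg (x m - p₀)]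
  have habdd : BddBelow (Set.range a) := ⟨0, by rintro _ ⟨k, rfl⟩; positivity⟩
  have haL : Tendsto a atTop (𝓝 (⨅ k, a k)) := tendsto_atTop_ciInf haanti habdd
  have haL' : Tendsto (fun k => a (k+1)) atTop (𝓝 (⨅ k, a k)) :=
    haL.comp (tendsto_add_atTop_nat 1)
  have hdiff : Tendsto (fun k => a k - a (k+1)) atTop (𝓝 0) := by
    simpa using haL.sub haL'
  -- the residual tends to zero
  have hcpos : (0:ℝ) < (1-α)/α := div_pos (by linarith) hα0
  have hsq : Tendsto (fun k => ‖x k - x (k+1)‖^2) atTop (𝓝 0) := by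
    have hle : ∀ k, ((1-α)/α) * ‖x k - x (k+1)‖^2 ≤ a k - a (k+1) := by
      intro k
      have h := hkey p₀ hp₀ (x k)
      rw [← hxsucc k] at h
      simp only [a]; linarith
    have h0 : ∀ k, (0:ℝ) ≤ ((1-α)/α) * ‖x k - x (k+1)‖^2 := fun k =>
      mul_nonneg hcpos.le (sq_nonneg _)
    have hmid : Tendsto (fun k => ((1-α)/α) * ‖x k - x (k+1)‖^2) atTop (𝓝 0) :=
      squeeze_zero h0 hle hdiff
    have := hmid.const_mul (α/(1-α))
    simp only [mul_zero] at this
    convert this using 2 with k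
    have h1 : (1-α) ≠ 0 := by linarith
    have h2 : α ≠ 0 := ne_of_gt hα0
    field_simp
  have hres : Tendsto (fun k => x k - T (x k)) atTop (𝓝 0) := by
    rw [tendsto_zero_iff_norm_tendsto_zero]
    have hn : Tendsto (fun k => ‖x k - x (k+1)‖) atTop (𝓝 0) := by
      have := (Real.continuous_sqrt.tendsto 0).comp hsq
      simpa [Function.comp_def, Real.sqrt_sq (norm_nonneg _)] using this
    simpa [hxsucc] using hn
  -- compactness: convergent subsequence
  have hmem : ∀ k, x k ∈ Metric.closedBall p₀ ‖x₀ - p₀‖ := by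
    intro k
    rw [Metric.mem_closedBall, dist_eq_norm]
    have := hanti p₀ hp₀ (Nat.zero_le k)
    simpa [x] using this
  obtain ⟨q, hqmem, φ, hφ, hconv⟩ :=
    (isCompact_closedBall p₀ ‖x₀ - p₀‖).tendsto_subseq hmem
  have hqfix : T q = q := by
    have h1 : Tendsto (fun n => x (φ n) - T (x (φ n))) atTop (𝓝 (q - T q)) :=
      hconv.sub (((hTc.tendsto q).comp hconv))
    have h2 : Tendsto (fun n => x (φ n) - T (x (φ n))) atTop (𝓝 0) :=
      hres.comp hφ.tendsto_atTop
    have := tendsto_nhds_unique h1 h2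
    have := sub_eq_zero.mp this
    exact this.symm
  refine ⟨q, hqfix, ?_⟩
  -- Fejér monotonicity: whole sequence converges to q
  have hbq : Antitone (fun k => ‖x k - q‖) := hanti q hqfix
  have hbdd : BddBelow (Set.range fun k => ‖x k - q‖) :=
    ⟨0, by rintro _ ⟨k, rfl⟩; positivity⟩
  have hbL : Tendsto (fun k => ‖x k - q‖) atTop (𝓝 (⨅ k, ‖x k - q‖)) :=
    tendsto_atTop_ciInf hbq hbdd
  have hsub0 : Tendsto (fun n => ‖x (φ n) - q‖) atTop (𝓝 0) := by
    have : Tendsto (fun n => x (φ n) - q) atTop (𝓝 (q - q)) := hconv.sub tendsto_const_nhds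
    rw [sub_self] at this
    exact (tendsto_zero_iff_norm_tendsto_zero.mp this)
  have hsubL : Tendsto (fun n => ‖x (φ n) - q‖) atTop (𝓝 (⨅ k, ‖x k - q‖)) :=
    hbL.comp hφ.tendsto_atTop
  have hL0 : (⨅ k, ‖x k - q‖) = 0 := tendsto_nhds_unique hsubL hsub0
  rw [hL0] at hbL
  have : Tendsto (fun k => x k - q) atTop (𝓝 0) :=
    tendsto_zero_iff_norm_tendsto_zero.mpr hbL
  have := this.add_const q
  simpa using this
end
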